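/- Let n, m, ν be positive real numbers with n ≠ m. Set λ = (m − n)²/(8ν) − n − m and d = (n + m)/2 − ν. Then the 4×4 real symmetric matrix V₁ = [[n+λ, 0, −(d+λ), 0], [0, n, 0, d], [−(d+λ), 0, m+λ, 0], [0, d, 0, m]] is not positive definite; in particular, its characteristic polynomial has a quadratic factor whose constant term equals −ν(n + m + ν) < 0, so V₁ has a negative eigenvalue. -/

import Mathlib

open Matrix Polynomial

noncomputable section

/-! The matrix `V₁` is the direct sum of a `2 × 2` block on the coordinates `(x₁, x₃)` and one on
`(x₂, x₄)`, so its characteristic polynomial is the product of theirs. The choice of `λ` makes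
the determinant of the first block equal to `-ν (n + m + ν) < 0`; a monic real quadratic with
negative constant term has a negative root, which is then a negative eigenvalue of `V₁`. -/

lemma Matrix.charpoly_checkerboard {R : Type*} [CommRing R] (a b b' c p q q' r : R) :
    (!![a, 0, b, 0; 0, p, 0, q; b', 0, c, 0; 0, q', 0, r] : Matrix (Fin 4) (Fin 4) R).charpoly
      = (X ^ 2 + C (-(a + c)) * X + C (a * c - b * b')) *
        (X ^ 2 + C (-(p + r)) * X + C (p * r - q * q')) := by
  have hcharmatrix :
      (!![a, 0, b, 0; 0, p, 0, q; b', 0, c, 0; 0, q', 0, r] : Matrix (Fin 4) (Fin 4) R).charmatrix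
        = !![X - C a, 0, -C b, 0; 0, X - C p, 0, -C q;
             -C b', 0, X - C c, 0; 0, -C q', 0, X - C r] := by
    ext i j
    fin_cases i <;> fin_cases j <;> simp [charmatrix_apply_eq, charmatrix_apply_ne]
  rw [Matrix.charpoly, hcharmatrix]
  simp [Matrix.det_succ_row_zero, Fin.sum_univ_succ,
    show Fin.succAbove (2 : Fin 4) (2 : Fin 3) = 3 by decide]
  ring

lemma exists_neg_quadratic_root_of_neg_const {b k : ℝ} (hk : k < 0) :
    ∃ x < 0, x ^ 2 + b * x + k = 0 := by
  set s := √(b ^ 2 - 4 * k)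
  have hs : s ^ 2 = b ^ 2 - 4 * k := Real.sq_sqrt (by nlinarith)
  have hbs : |b| < s := by
    rw [← Real.sqrt_sq_eq_abs]
    exact Real.sqrt_lt_sqrt (sq_nonneg b) (by linarith)
  refine ⟨(-b - s) / 2, ?_, ?_⟩
  · linarith [neg_abs_le b]
  · linear_combination hs / 4

lemma Matrix.PosDef.pos_of_hasEigenvalue_toLin' {ι : Type*} [Fintype ι] [DecidableEq ι]
    {A : Matrix ι ι ℝ} (hA : A.PosDef) {x : ℝ} (hx : Module.End.HasEigenvalue (toLin' A) x) :
    0 < x := by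
  obtain ⟨v, hv⟩ := hx.exists_hasEigenvector
  have hAv : A *ᵥ v = x • v := by simpa using hv.apply_eq_smul
  have hvv : 0 < v ⬝ᵥ v := by simpa using dotProduct_self_star_pos_iff.2 hv.2
  have hpos := hA.dotProduct_mulVec_pos hv.2
  rw [hAv, star_trivial, dotProduct_smul, smul_eq_mul] at hpos
  exact pos_of_mul_pos_left hpos hvv.le

lemma standardFormIII_block_det {n m ν : ℝ} (hν : ν ≠ 0) :
    let lam := (m - n) ^ 2 / (8 * ν) - n - m
    let d := (n + m) / 2 - ν
    (n + lam) * (m + lam) - -(d + lam) * -(d + lam) = -(ν * (n + m + ν)) := by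
  intro lam d
  simp only [lam, d]
  field_simp
  ring

theorem standard_form_III_not_posDef (n m ν : ℝ)
    (hn : 0 < n) (hm : 0 < m) (hν : 0 < ν) :
    let lam : ℝ := (m - n) ^ 2 / (8 * ν) - n - m
    let d : ℝ := (n + m) / 2 - ν
    let V₁ : Matrix (Fin 4) (Fin 4) ℝ :=
      !![n + lam, 0, -(d + lam), 0;
         0, n, 0, d;
         -(d + lam), 0, m + lam, 0;
         0, d, 0, m]
    ¬ V₁.PosDef ∧
      (∃ c₁ g₁ g₀ : ℝ,
        V₁.charpoly =
          (X ^ 2 + Polynomial.C c₁ * X + Polynomial.C (-(ν * (n + m + ν)))) *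
            (X ^ 2 + Polynomial.C g₁ * X + Polynomial.C g₀)) ∧
      -(ν * (n + m + ν)) < 0 ∧
      ∃ x : ℝ, x < 0 ∧ Module.End.HasEigenvalue (Matrix.toLin' V₁) x := by
  intro lam d V₁
  have hcharpoly : V₁.charpoly =
      (X ^ 2 + C (-(n + lam + (m + lam))) * X + C (-(ν * (n + m + ν)))) *
        (X ^ 2 + C (-(n + m)) * X + C (n * m - d * d)) := by
    rw [Matrix.charpoly_checkerboard, standardFormIII_block_det hν.ne']
  have hconst : -(ν * (n + m + ν)) < 0 := by
    have : 0 < ν * (n + m + ν) := by positivity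
    linarith
  obtain ⟨x, hx, hroot⟩ :=
    exists_neg_quadratic_root_of_neg_const (b := -(n + lam + (m + lam))) hconst
  have heig : Module.End.HasEigenvalue (toLin' V₁) x := by
    rw [Module.End.hasEigenvalue_iff_isRoot_charpoly, Matrix.charpoly_toLin', hcharpoly]
    simp only [IsRoot, eval_mul, eval_add, eval_pow, eval_X, eval_C, hroot, zero_mul]
  exact ⟨fun hpos => hx.not_gt (hpos.pos_of_hasEigenvalue_toLin' heig),
    ⟨_, _, _, hcharpoly⟩, hconst, x, hx, heig⟩
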